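/- Let kr, kp, γp, γr > 0. The linear system ẋ = A·x + B·kr with A = [[−γr, 0, 0, 0, 0], [kp, −γp, 0, 0, 0], [γr, 0, −2γr, 0, 0], [0, 0, kp, −(γr + γp), 0], [kp, γp, 0, 2kp, −2γp]] and B = (1, 0, 1, 0, 0)ᵀ has a unique equilibrium point x* (the solution of A·x* + B·kr = 0), and this equilibrium satisfies x2* = kp·kr/(γr·γp) and x5* = (1 + kp/(γp + γr))·x2*. In particular, the stationary variance always exceeds the stationary mean, and the stationary coefficient of variation equals √((1 + kp/(γp + γr))/x2*). -/

import Mathlib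

/-! Since `Asys` is lower triangular with nonzero diagonal, the equilibrium equations are solved
by forward substitution: mRNA mean, protein mean, mRNA variance, covariance, protein variance. -/

/-- State matrix of the first- and second-order moment equations of the
gene expression network, in the state `x = (x1, x2, x3, x4, x5)`. -/
def Asys (kp γp γr : ℝ) : Matrix (Fin 5) (Fin 5) ℝ :=
  !![-γr, 0, 0, 0, 0;
     kp, -γp, 0, 0, 0;
     γr, 0, -2 * γr, 0, 0;
     0, 0, kp, -(γr + γp), 0;
     kp, γp, 0, 2 * kp, -2 * γp]

/-- Input vector of the moment equations. -/
def Bsys : Fin 5 → ℝ := ![1, 0, 1, 0, 0]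

theorem Real.sqrt_mul_div_self {a m : ℝ} (ha : 0 ≤ a) (hm : 0 < m) :
    √(a * m) / m = √(a / m) := by
  rw [Real.sqrt_div' a hm.le, Real.sqrt_mul ha, mul_div_assoc, Real.sqrt_div_self', mul_one_div]

section MomentEquations

variable (kr kp γp γr : ℝ)

noncomputable def momentEquilibrium : Fin 5 → ℝ :=
  ![kr / γr, kp * kr / (γr * γp), kr / γr, kp * kr / (γr * (γr + γp)),
    (1 + kp / (γp + γr)) * (kp * kr / (γr * γp))]

theorem Asys_mulVec (x : Fin 5 → ℝ) :
    (Asys kp γp γr).mulVec x =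
      ![-γr * x 0, kp * x 0 - γp * x 1, γr * x 0 - 2 * γr * x 2,
        kp * x 2 - (γr + γp) * x 3, kp * x 0 + γp * x 1 + 2 * kp * x 3 - 2 * γp * x 4] := by
  ext i
  fin_cases i <;> simp [Asys, Matrix.mulVec, dotProduct, Fin.sum_univ_five] <;> ring

variable {kr kp γp γr}

theorem Asys_mulVec_add_smul_Bsys_eq_zero_iff (hγp : γp ≠ 0) (hγr : γr ≠ 0)
    (hγrp : γr + γp ≠ 0) (x : Fin 5 → ℝ) :
    (Asys kp γp γr).mulVec x + kr • Bsys = 0 ↔ x = momentEquilibrium kr kp γp γr := by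
  have hγpr : γp + γr ≠ 0 := by rwa [add_comm]
  rw [Asys_mulVec]
  constructor
  · intro h
    have h0 := congrFun h 0
    have h1 := congrFun h 1
    have h2 := congrFun h 2
    have h3 := congrFun h 3
    have h4 := congrFun h 4
    simp only [Bsys, Pi.add_apply, Pi.smul_apply, smul_eq_mul, Pi.zero_apply,
      Matrix.cons_val, mul_zero, mul_one, add_zero] at h0 h1 h2 h3 h4
    have e0 : x 0 = kr / γr := by field_simp; linarith
    have e1 : x 1 = kp * kr / (γr * γp) := by
      rw [e0] at h1; field_simp at h1 ⊢; linarith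
    have e2 : x 2 = kr / γr := by
      rw [e0] at h2; field_simp at h2 ⊢; linarith
    have e3 : x 3 = kp * kr / (γr * (γr + γp)) := by
      rw [e2] at h3; field_simp at h3 ⊢; linarith
    have e4 : x 4 = (1 + kp / (γp + γr)) * (kp * kr / (γr * γp)) := by
      have h4' : x 4 = (kp * x 0 + γp * x 1 + 2 * kp * x 3) / (2 * γp) := by
        field_simp; linarith
      rw [h4', e0, e1, e3]; field_simp; ring
    ext i
    fin_cases i <;> simp [momentEquilibrium, e0, e1, e2, e3, e4]
  · rintro rfl
    ext i
    fin_cases i <;> simp [momentEquilibrium, Bsys] <;> field_simp <;> ring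

end MomentEquations

theorem stmt9 (kr kp γp γr : ℝ)
    (hkr : 0 < kr) (hkp : 0 < kp) (hγp : 0 < γp) (hγr : 0 < γr) :
    (∃! x : Fin 5 → ℝ, (Asys kp γp γr).mulVec x + kr • Bsys = 0) ∧
    (∀ x : Fin 5 → ℝ, (Asys kp γp γr).mulVec x + kr • Bsys = 0 →
      x 1 = kp * kr / (γr * γp) ∧
      x 4 = (1 + kp / (γp + γr)) * x 1 ∧
      x 1 < x 4 ∧
      Real.sqrt (x 4) / x 1 = Real.sqrt ((1 + kp / (γp + γr)) / x 1)) := by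
  have equilibrium_iff :=
    Asys_mulVec_add_smul_Bsys_eq_zero_iff (kr := kr) (kp := kp) hγp.ne' hγr.ne' (by positivity)
  refine ⟨⟨_, (equilibrium_iff _).2 rfl, fun x hx => (equilibrium_iff x).1 hx⟩, ?_⟩
  intro x hx
  obtain rfl := (equilibrium_iff x).1 hx
  have hmean : 0 < kp * kr / (γr * γp) := by positivity
  have hfano : 1 < 1 + kp / (γp + γr) := by simp only [lt_add_iff_pos_right]; positivity
  exact ⟨rfl, rfl, lt_mul_of_one_lt_left hmean hfano,
    Real.sqrt_mul_div_self (by positivity) hmean⟩
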